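/- Every graph that can be obtained from some graph H with at least one vertex by attaching a complete graph on at least 4 vertices to a vertex of H, where H itself is a complete graph on at least 4 vertices, is an OAT graph but is not a compact graph. -/

import Mathlib

/-- The disjoint union of two simple graphs. -/
def dUnion {V W : Type} (G : SimpleGraph V) (H : SimpleGraph W) : SimpleGraph (V ⊕ W) :=
  SimpleGraph.fromRel (fun a b =>
    (∃ x y, a = Sum.inl x ∧ b = Sum.inl y ∧ G.Adj x y) ∨
    (∃ x y, a = Sum.inr x ∧ b = Sum.inr y ∧ H.Adj x y))

/-- The join of two simple graphs: all edges between the two sides are added. -/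
def joinG {V W : Type} (G : SimpleGraph V) (H : SimpleGraph W) : SimpleGraph (V ⊕ W) :=
  SimpleGraph.fromRel (fun a b =>
    (∃ x y, a = Sum.inl x ∧ b = Sum.inl y ∧ G.Adj x y) ∨
    (∃ x y, a = Sum.inr x ∧ b = Sum.inr y ∧ H.Adj x y) ∨
    (∃ x y, a = Sum.inl x ∧ b = Sum.inr y))

/-- Adding a new vertex (`none`) whose neighbourhood is the set `X`. When
`X ⊆ N(v)` this is the operation of adding a vertex comparable to `v`. -/
def addComparable {V : Type} (G : SimpleGraph V) (X : Set V) : SimpleGraph (Option V) :=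
  SimpleGraph.fromRel (fun a b =>
    (∃ x y, a = some x ∧ b = some y ∧ G.Adj x y) ∨
    (∃ x, a = none ∧ b = some x ∧ x ∈ X))

/-- Attaching a complete graph on `q` vertices to the vertex `v`: every new
vertex is adjacent to `v` and to every other new vertex. -/
def attachClique {V : Type} (G : SimpleGraph V) (v : V) (q : ℕ) : SimpleGraph (V ⊕ Fin q) :=
  SimpleGraph.fromRel (fun a b =>
    (∃ x y, a = Sum.inl x ∧ b = Sum.inl y ∧ G.Adj x y) ∨
    (∃ i j, a = Sum.inr i ∧ b = Sum.inr j) ∨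
    (∃ i, a = Sum.inl v ∧ b = Sum.inr i))

/-- OAT graphs: graphs constructible from single vertices by disjoint union,
join, adding a comparable vertex, and attaching a clique to a vertex
(up to isomorphism). -/
inductive IsOAT : {V : Type} → SimpleGraph V → Prop
  | single : IsOAT (⊥ : SimpleGraph (Fin 1))
  | dunion {V W : Type} {G : SimpleGraph V} {H : SimpleGraph W} :
      IsOAT G → IsOAT H → IsOAT (dUnion G H)
  | join {V W : Type} {G : SimpleGraph V} {H : SimpleGraph W} :
      IsOAT G → IsOAT H → IsOAT (joinG G H)
  | comparable {V : Type} {G : SimpleGraph V} (v : V) (X : Set V)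
      (hX : X ⊆ G.neighborSet v) : IsOAT G → IsOAT (addComparable G X)
  | clique {V : Type} {G : SimpleGraph V} (v : V) (q : ℕ) (hq : 1 ≤ q) :
      IsOAT G → IsOAT (attachClique G v q)
  | iso {V W : Type} {G : SimpleGraph V} {H : SimpleGraph W} :
      IsOAT G → G ≃g H → IsOAT H


/-- A walk is a chordless path if it is a path and the only adjacencies among its vertices are
between consecutive vertices of the walk. -/
def IsChordlessPath {V : Type} {G : SimpleGraph V} {u v : V} (w : G.Walk u v) : Prop :=
  w.IsPath ∧ ∀ i j : Fin w.support.length,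
    G.Adj (w.support.get i) (w.support.get j) → (i.val + 1 = j.val ∨ j.val + 1 = i.val)

/-- A 2-pair: two distinct non-adjacent vertices such that every chordless path between them
has exactly two edges. -/
def IsTwoPair {V : Type} (G : SimpleGraph V) (x y : V) : Prop :=
  x ≠ y ∧ ¬ G.Adj x y ∧ ∀ w : G.Walk x y, IsChordlessPath w → w.length = 2

/-- `G` contains a hole: an induced cycle on at least 5 vertices. -/
def HasHole {V : Type} (G : SimpleGraph V) : Prop :=
  ∃ n, 5 ≤ n ∧ ∃ f : Fin n → V, Function.Injective f ∧
    ∀ i j : Fin n, G.Adj (f i) (f j) ↔ (i ≠ j ∧ ((i.val + 1) % n = j.val ∨ (j.val + 1) % n = i.val))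

/-- `G` is weakly chordal: neither `G` nor its complement contains a hole. -/
def WeaklyChordal {V : Type} (G : SimpleGraph V) : Prop :=
  ¬ HasHole G ∧ ¬ HasHole Gᶜ

/-- For a 2-pair `{x,y}` of `H`, `S(x,y) = N(x) ∩ N(y)`. -/
def twoPairSep {V : Type} (H : SimpleGraph V) (x y : V) : Set V :=
  H.neighborSet x ∩ H.neighborSet y

/-- For a 2-pair `{x,y}` of `H`, `C_x` is (the vertex set of) the connected component of
`H \ S(x,y)` containing `x`. -/
def twoPairComp {V : Type} (H : SimpleGraph V) (x y : V) : Set V :=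
  {z | ∃ (hx : x ∈ (twoPairSep H x y)ᶜ) (hz : z ∈ (twoPairSep H x y)ᶜ),
    (H.induce (twoPairSep H x y)ᶜ).Reachable ⟨x, hx⟩ ⟨z, hz⟩}

/-- A weakly chordal graph `G` is compact if every induced subgraph `H` either is complete,
or contains a 2-pair `{x,y}` with `N_H(x) ⊆ N_H(y)`, or contains a 2-pair `{x,y}` such that
`C_x ∪ S(x,y)` induces a clique on at most three vertices in `H`. -/
def IsCompactGraph {V : Type} (G : SimpleGraph V) : Prop :=
  WeaklyChordal G ∧ ∀ s : Set V,
    (G.induce s).IsClique Set.univ ∨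
    (∃ x y : s, IsTwoPair (G.induce s) x y ∧
      (G.induce s).neighborSet x ⊆ (G.induce s).neighborSet y) ∨
    (∃ x y : s, IsTwoPair (G.induce s) x y ∧
      (G.induce s).IsClique (twoPairComp (G.induce s) x y ∪ twoPairSep (G.induce s) x y) ∧
      (twoPairComp (G.induce s) x y ∪ twoPairSep (G.induce s) x y).ncard ≤ 3)


/-
The graph is `K_p` (itself OAT, as `K_1` with `K_{p-1}` attached) with a clique attached, hence
OAT. The whole graph already violates compactness: it is not complete; its non-adjacent pairs
consist of a vertex `u ≠ v` of `K_p` and a vertex of `K_q`, and neither neighbourhood contains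
the other; and `C_x ∪ S(x,y)` always contains the closed neighbourhood of `x`, which here has at
least `min p q ≥ 4` vertices.
-/

open Set SimpleGraph

section AttachClique

variable {V : Type} {G : SimpleGraph V} {v : V} {q : ℕ}

@[simp]
lemma attachClique_adj_inl_inl {x y : V} :
    (attachClique G v q).Adj (.inl x) (.inl y) ↔ G.Adj x y := by
  simp only [attachClique, fromRel_adj]
  simp only [Sum.inl.injEq, exists_and_left, exists_eq_left', reduceCtorEq,
    exists_false, ne_eq, and_false, or_false]
  exact ⟨fun ⟨_, h⟩ => h.elim id Adj.symm, fun h => ⟨h.ne, .inl h⟩⟩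

@[simp]
lemma attachClique_adj_inr_inr {i j : Fin q} :
    (attachClique G v q).Adj (.inr i) (.inr j) ↔ i ≠ j := by
  simp [attachClique]

@[simp]
lemma attachClique_adj_inl_inr {x : V} {i : Fin q} :
    (attachClique G v q).Adj (.inl x) (.inr i) ↔ x = v := by
  simp [attachClique]

@[simp]
lemma attachClique_adj_inr_inl {x : V} {i : Fin q} :
    (attachClique G v q).Adj (.inr i) (.inl x) ↔ x = v := by
  simp [attachClique]

end AttachClique

lemma attachClique_bot_fin_one (n : ℕ) : attachClique (⊥ : SimpleGraph (Fin 1)) 0 n = ⊤ := by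
  ext a b
  rcases a with x | i <;> rcases b with y | j <;> simp [Fin.fin_one_eq_zero]

lemma isOAT_top (V : Type) [Fintype V] [Nonempty V] : IsOAT (⊤ : SimpleGraph V) := by
  obtain ⟨n, hn⟩ : ∃ n, Fintype.card V = 1 + n :=
    ⟨Fintype.card V - 1, by have := Fintype.card_pos (α := V); omega⟩
  rcases n.eq_zero_or_pos with rfl | hn0
  · have hK1 : IsOAT (⊤ : SimpleGraph (Fin 1)) :=
      Subsingleton.elim (⊥ : SimpleGraph (Fin 1)) ⊤ ▸ .single
    exact hK1.iso (Iso.completeGraph (Fintype.equivFinOfCardEq hn).symm)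
  · have hK := IsOAT.clique 0 n hn0 .single
    rw [attachClique_bot_fin_one] at hK
    exact hK.iso (Iso.completeGraph (finSumFinEquiv.trans (Fintype.equivFinOfCardEq hn).symm))

lemma insert_neighborSet_subset_twoPairComp_union_twoPairSep {V : Type} (H : SimpleGraph V)
    (x y : V) : insert x (H.neighborSet x) ⊆ twoPairComp H x y ∪ twoPairSep H x y := by
  have hx : x ∉ twoPairSep H x y := fun h => H.irrefl h.1
  rintro z (rfl | hxz)
  · exact .inl ⟨hx, hx, .refl _⟩
  · by_cases hyz : H.Adj y z
    · exact .inr ⟨hxz, hyz⟩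
    · exact .inl ⟨hx, fun h => hyz h.2, Adj.reachable hxz⟩

lemma IsCompactGraph.isClique_or_exists {V : Type} [Finite V] {G : SimpleGraph V}
    (hG : IsCompactGraph G) :
    G.IsClique univ ∨
      (∃ x y, x ≠ y ∧ ¬ G.Adj x y ∧ G.neighborSet x ⊆ G.neighborSet y) ∨
      ∃ x, (insert x (G.neighborSet x)).ncard ≤ 3 := by
  rcases hG.2 univ with hcl | ⟨x, y, ⟨hne, hxy, -⟩, hsub⟩ | ⟨x, y, -, -, hcard⟩
  · exact .inl fun a _ b _ hab =>
      hcl (mem_univ (⟨a, trivial⟩ : univ)) (mem_univ (⟨b, trivial⟩ : univ))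
        fun h => hab (congrArg Subtype.val h)
  · exact .inr <| .inl
      ⟨x, y, Subtype.coe_injective.ne hne, hxy, fun z hz => @hsub ⟨z, trivial⟩ hz⟩
  · refine .inr <| .inr ⟨x, ?_⟩
    have hpre : Subtype.val ⁻¹' insert x.1 (G.neighborSet x) =
        insert x ((G.induce univ).neighborSet x) := by
      ext z
      simp [Subtype.ext_iff]
    calc (insert x.1 (G.neighborSet x)).ncard
        = (insert x ((G.induce univ).neighborSet x)).ncard := by
          rw [← hpre, ncard_preimage_of_injective_subset_range Subtype.val_injective (by simp)]
      _ ≤ _ := ncard_le_ncard (insert_neighborSet_subset_twoPairComp_union_twoPairSep _ x y)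
      _ ≤ 3 := hcard

section CliqueOnClique

variable {p q : ℕ} (v : Fin p)

lemma min_le_ncard_insert_neighborSet_attachClique_top (z : Fin p ⊕ Fin q) :
    min p q ≤ (insert z ((attachClique ⊤ v q).neighborSet z)).ncard := by
  rcases z with u | i
  · calc min p q ≤ (range Sum.inl).ncard := by
          simp [ncard_range_of_injective Sum.inl_injective]
      _ ≤ _ := ncard_le_ncard <| by
          rintro _ ⟨w, rfl⟩
          exact (eq_or_ne w u).imp (congrArg _) fun h => attachClique_adj_inl_inl.2 h.symm
  · calc min p q ≤ (range Sum.inr).ncard := by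
          simp [ncard_range_of_injective Sum.inr_injective]
      _ ≤ _ := ncard_le_ncard <| by
          rintro _ ⟨j, rfl⟩
          exact (eq_or_ne j i).imp (congrArg _) fun h => attachClique_adj_inr_inr.2 h.symm

lemma attachClique_top_not_isCompactGraph (hp : 4 ≤ p) (hq : 4 ≤ q) :
    ¬ IsCompactGraph (attachClique ⊤ v q) := by
  intro hG
  rcases hG.isClique_or_exists with hcl | ⟨x, y, hne, hxy, hsub⟩ | ⟨z, hz⟩
  · obtain ⟨u, hu, -⟩ := Fin.exists_ne_and_ne_of_two_lt v v (by omega)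
    exact hu <| attachClique_adj_inl_inr.1 <|
      hcl (mem_univ _) (mem_univ (Sum.inr ⟨0, by omega⟩)) Sum.inl_ne_inr
  · rcases x with u | i <;> rcases y with u' | i'
    · simp_all
    · obtain ⟨w, hwu, hwv⟩ := Fin.exists_ne_and_ne_of_two_lt u v (by omega)
      simpa [hwv] using @hsub (Sum.inl w) (by simpa using hwu.symm)
    · obtain ⟨j, hji, -⟩ := Fin.exists_ne_and_ne_of_two_lt i i (by omega)
      exact hxy (by simpa using @hsub (Sum.inr j) (by simpa using hji.symm))
    · simp_all
  · have := min_le_ncard_insert_neighborSet_attachClique_top v z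
    omega

end CliqueOnClique

/-- Attaching a complete graph on at least 4 vertices to a vertex of a complete graph on at
least 4 vertices yields an OAT graph that is not compact. -/
theorem stmt19 (p q : ℕ) (hp : 4 ≤ p) (hq : 4 ≤ q) (v : Fin p) :
    IsOAT (attachClique (⊤ : SimpleGraph (Fin p)) v q) ∧
    ¬ IsCompactGraph (attachClique (⊤ : SimpleGraph (Fin p)) v q) := by
  have : Nonempty (Fin p) := ⟨v⟩
  exact ⟨.clique v q (by omega) (isOAT_top _), attachClique_top_not_isCompactGraph v hp hq⟩
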